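/- Fix t ≥ 1, λ > 0, r_{t−1} ∈ ℝ, a nonempty compact polyhedron X = {x : Ax ≥ b}, PSD matrix Q_t, and vectors c_t, y_t. Suppose for each r in a compact interval [0,R] the set S(r) = S(Q_t,c_t,A,b;r) is nonempty. Then the update problem min_{r ∈ [0,R]} (1/2)(r − r_{t−1})² + (λ/√t)·min_{x ∈ S(r)}‖y_t − x‖² attains its minimum. -/

import Mathlib

open Matrix Set Finset

/-!
The proximal objective `(1/2)(r - r_{t-1})² + c · min_{x ∈ S(r)} ‖y_t - x‖²` (with `c = λ/√t ≥ 0`)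
is the marginal function of the jointly continuous `(r, x) ↦ (1/2)(r - r_{t-1})² + c ‖y_t - x‖²`
over the graph of `S` above `[0, R]`. Since `S(r)` is the argmin set of a jointly continuous
function of `(r, x)` over the compact `X`, this graph is closed in the compact `[0, R] × X`,
so the joint function has a minimizer `(r₀, x₀)` there, and `r₀` minimizes the marginal function.
-/

section Marginal

variable {α E : Type*} [TopologicalSpace α] [TopologicalSpace E]

theorem isClosed_setOf_mem_and_forall_le {X : Set E} (hX : IsClosed X) {φ : α → E → ℝ}
    (hφ : Continuous (Function.uncurry φ)) :
    IsClosed {p : α × E | p.2 ∈ X ∧ ∀ z ∈ X, φ p.1 p.2 ≤ φ p.1 z} := by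
  have hslice : ∀ z, Continuous fun p : α × E => φ p.1 z := fun z =>
    hφ.comp (continuous_fst.prodMk continuous_const)
  have hset : {p : α × E | p.2 ∈ X ∧ ∀ z ∈ X, φ p.1 p.2 ≤ φ p.1 z} =
      Prod.snd ⁻¹' X ∩ ⋂ z ∈ X, {p | φ p.1 p.2 ≤ φ p.1 z} := by
    ext; simp
  rw [hset]
  exact (hX.preimage continuous_snd).inter
    (isClosed_biInter fun z _ => isClosed_le hφ (hslice z))

theorem IsCompact.exists_isMinOn_sInf_image {K : Set α} {X : Set E} (hK : IsCompact K)
    (hKne : K.Nonempty) (hX : IsCompact X) {S : α → Set E}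
    (hS : IsClosed {p : α × E | p.2 ∈ S p.1}) (hSX : ∀ r, S r ⊆ X)
    (hSne : ∀ r ∈ K, (S r).Nonempty) {f : α → E → ℝ}
    (hf : Continuous (Function.uncurry f)) :
    ∃ r₀ ∈ K, IsMinOn (fun r => sInf (f r '' S r)) K r₀ := by
  have hfr : ∀ r, Continuous (f r) := fun r => hf.comp (continuous_const.prodMk continuous_id)
  have hScpt : ∀ r, IsCompact (S r) := fun r =>
    hX.of_isClosed_subset (hS.preimage (continuous_const.prodMk continuous_id)) (hSX r)
  set G := {p : α × E | p.2 ∈ S p.1} ∩ K ×ˢ X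
  have hGne : G.Nonempty := by
    obtain ⟨r, hr⟩ := hKne
    obtain ⟨x, hx⟩ := hSne r hr
    exact ⟨(r, x), hx, hr, hSX r hx⟩
  obtain ⟨⟨r₀, x₀⟩, ⟨hx₀, hr₀, -⟩, hmin⟩ :=
    ((hK.prod hX).inter_left hS).exists_isMinOn hGne hf.continuousOn
  refine ⟨r₀, hr₀, fun r hr => ?_⟩
  obtain ⟨x, hx, hxmin⟩ := (hScpt r).exists_sInf_image_eq (hSne r hr) (hfr r).continuousOn
  calc sInf (f r₀ '' S r₀)
      ≤ f r₀ x₀ := csInf_le ((hScpt r₀).bddBelow_image (hfr r₀).continuousOn) ⟨x₀, hx₀, rfl⟩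
    _ ≤ f r x := hmin (show (r, x) ∈ G from ⟨hx, hr, hSX r hx⟩)
    _ = sInf (f r '' S r) := hxmin.symm

end Marginal

theorem Real.sInf_image_const_add_mul {E : Type*} {s : Set E} {h : E → ℝ} (hs : s.Nonempty)
    (hb : BddBelow (h '' s)) (a : ℝ) {c : ℝ} (hc : 0 ≤ c) :
    sInf ((fun x => a + c * h x) '' s) = a + c * sInf (h '' s) := by
  have hmono : Monotone fun y : ℝ => a + c * y := fun _ _ hxy =>
    add_le_add_right (mul_le_mul_of_nonneg_left hxy hc) a
  rw [← image_image (fun y => a + c * y) h,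
    ← hmono.map_csInf_of_continuousAt (by fun_prop) (hs.image h) hb]

theorem stmt_17_general {n : ℕ} (t : ℕ) (lam : ℝ) (hlam : 0 < lam)
    (rprev : ℝ) (Qt : Matrix (Fin n) (Fin n) ℝ)
    (X : Set (Fin n → ℝ))
    (hcpt : IsCompact X)
    (ct : Fin n → ℝ) (yt : Fin n → ℝ) (R : ℝ) (hR : 0 ≤ R)
    (S : ℝ → Set (Fin n → ℝ))
    (hSdef : ∀ r, S r = {x ∈ X | ∀ z ∈ X,
      (1 / 2) * (x ⬝ᵥ (Qt *ᵥ x)) - r * (ct ⬝ᵥ x) ≤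
        (1 / 2) * (z ⬝ᵥ (Qt *ᵥ z)) - r * (ct ⬝ᵥ z)})
    (hSne : ∀ r ∈ Set.Icc (0 : ℝ) R, (S r).Nonempty) :
    ∃ r₀ ∈ Set.Icc (0 : ℝ) R, ∀ r ∈ Set.Icc (0 : ℝ) R,
      (1 / 2) * (r₀ - rprev) ^ 2 +
          (lam / Real.sqrt t) *
            sInf ((fun x : Fin n → ℝ => ∑ i, (yt i - x i) ^ 2) '' S r₀) ≤
        (1 / 2) * (r - rprev) ^ 2 +
          (lam / Real.sqrt t) *
            sInf ((fun x : Fin n → ℝ => ∑ i, (yt i - x i) ^ 2) '' S r) := by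
  set h : (Fin n → ℝ) → ℝ := fun x => ∑ i, (yt i - x i) ^ 2
  have hc : 0 ≤ lam / Real.sqrt t := by positivity
  have hφ : Continuous (Function.uncurry fun (r : ℝ) (x : Fin n → ℝ) =>
      (1 / 2) * (x ⬝ᵥ (Qt *ᵥ x)) - r * (ct ⬝ᵥ x)) := by
    simp only [Function.uncurry_def]; fun_prop
  have hgraph : IsClosed {p : ℝ × (Fin n → ℝ) | p.2 ∈ S p.1} := by
    obtain rfl : S = _ := funext hSdef
    exact isClosed_setOf_mem_and_forall_le hcpt.isClosed hφ
  have hSX : ∀ r, S r ⊆ X := fun r x hx => by rw [hSdef] at hx; exact hx.1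
  have hf : Continuous (Function.uncurry fun r x =>
      (1 / 2) * (r - rprev) ^ 2 + lam / Real.sqrt t * h x) := by
    simp only [Function.uncurry_def]; fun_prop
  obtain ⟨r₀, hr₀, hmin⟩ := isCompact_Icc.exists_isMinOn_sInf_image ⟨0, le_rfl, hR⟩ hcpt
    hgraph hSX hSne hf
  have hvalue : ∀ r ∈ Icc 0 R, sInf ((fun x => (1 / 2) * (r - rprev) ^ 2 +
      lam / Real.sqrt t * h x) '' S r) = (1 / 2) * (r - rprev) ^ 2 + lam / Real.sqrt t *
      sInf (h '' S r) := fun r hr =>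
    Real.sInf_image_const_add_mul (hSne r hr)
      ⟨0, forall_mem_image.2 fun x _ => by positivity⟩ _ hc
  refine ⟨r₀, hr₀, fun r hr => ?_⟩
  rw [← hvalue r₀ hr₀, ← hvalue r hr]
  exact hmin hr

/-- Existence of the online inverse-optimization update: the proximal objective
`(1/2)(r - r_{t-1})² + (λ/√t)·min_{x ∈ S(r)} ‖y_t - x‖²` attains its minimum
over the compact interval `[0, R]`. -/
theorem stmt_17 {n m : ℕ} (t : ℕ) (ht : 1 ≤ t) (lam : ℝ) (hlam : 0 < lam)
    (rprev : ℝ) (Qt : Matrix (Fin n) (Fin n) ℝ) (hQ : Qt.PosSemidef)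
    (A : Matrix (Fin m) (Fin n) ℝ) (b : Fin m → ℝ)
    (X : Set (Fin n → ℝ)) (hXdef : X = {x | ∀ i, b i ≤ (A *ᵥ x) i})
    (hne : X.Nonempty) (hcpt : IsCompact X)
    (ct : Fin n → ℝ) (yt : Fin n → ℝ) (R : ℝ) (hR : 0 ≤ R)
    (S : ℝ → Set (Fin n → ℝ))
    (hSdef : ∀ r, S r = {x ∈ X | ∀ z ∈ X,
      (1 / 2) * (x ⬝ᵥ (Qt *ᵥ x)) - r * (ct ⬝ᵥ x) ≤
        (1 / 2) * (z ⬝ᵥ (Qt *ᵥ z)) - r * (ct ⬝ᵥ z)})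
    (hSne : ∀ r ∈ Set.Icc (0 : ℝ) R, (S r).Nonempty) :
    ∃ r₀ ∈ Set.Icc (0 : ℝ) R, ∀ r ∈ Set.Icc (0 : ℝ) R,
      (1 / 2) * (r₀ - rprev) ^ 2 +
          (lam / Real.sqrt t) *
            sInf ((fun x : Fin n → ℝ => ∑ i, (yt i - x i) ^ 2) '' S r₀) ≤
        (1 / 2) * (r - rprev) ^ 2 +
          (lam / Real.sqrt t) *
            sInf ((fun x : Fin n → ℝ => ∑ i, (yt i - x i) ^ 2) '' S r) :=
  stmt_17_general t lam hlam rprev Qt X hcpt ct yt R hR S hSdef hSne
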